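/- arXiv:0909.5581 — 2 statements merged into one kernel-verified Lean document; each statement's English description precedes it below -/
import Mathlib

section
/- The linear operator U_r on polynomials defined by U_r(⟨x⟩_{r,n}) = x^n satisfies U_r x U_r^{-1} = x(1 + x^{-r} D x^r) on polynomials, i.e., U_r(x·⟨x⟩_{r,n}) = x^{n+1} + [r+n] x^n for all n, where D is the q-derivative. -/
noncomputable section

open Finset Polynomial

/-- q-analogue [m] = (1-q^m)/(1-q) = 1 + q + ... + q^(m-1). -/
def qb (q : ℚ) (m : ℕ) : ℚ := ∑ i ∈ Finset.range m, q ^ i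

/-- q-factorial [n]! -/
def qfact (q : ℚ) (n : ℕ) : ℚ := ∏ i ∈ Finset.range n, qb q (i + 1)

/-- Gaussian binomial coefficient [n choose k]_q via the q-Pascal recurrence. -/
def qbinom (q : ℚ) : ℕ → ℕ → ℚ
  | _, 0 => 1
  | 0, _ + 1 => 0
  | n + 1, k + 1 => qbinom q n k + q ^ (k + 1) * qbinom q n (k + 1)

/-- Generalized q-Stirling numbers S(n,k,r). -/
def qS (q : ℚ) (r : ℕ) : ℕ → ℕ → ℚ
  | 0, 0 => 1
  | 0, _ + 1 => 0
  | n + 1, 0 => qb q r * qS q r n 0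
  | n + 1, k + 1 => qS q r n k + qb q (k + 1 + r) * qS q r n (k + 1)

/-- Generalized falling factorial ⟨x⟩_{r,k} = ∏_{j=0}^{k-1} (x - [r+j]). -/
def qfall (q : ℚ) (r : ℕ) (x : ℚ) (k : ℕ) : ℚ := ∏ j ∈ Finset.range k, (x - qb q (r + j))

/-- Falling factorial polynomial ⟨X⟩_{r,n}. -/
def ffpoly (q : ℚ) (r : ℕ) (n : ℕ) : Polynomial ℚ :=
  ∏ j ∈ Finset.range n, (Polynomial.X - Polynomial.C (qb q (r + j)))

/-- Any linear operator U_r with U_r(⟨x⟩_{r,n}) = x^n satisfies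
U_r(x·⟨x⟩_{r,n}) = x^{n+1} + [r+n] x^n, i.e. U_r x U_r^{-1} = x(1 + x^{-r} D x^r). -/
theorem Ur_conjugation (q : ℚ) (r : ℕ) (U : Polynomial ℚ →ₗ[ℚ] Polynomial ℚ)
    (hU : ∀ n : ℕ, U (ffpoly q r n) = Polynomial.X ^ n) (n : ℕ) :
    U (Polynomial.X * ffpoly q r n) =
      Polynomial.X ^ (n + 1) + Polynomial.C (qb q (r + n)) * Polynomial.X ^ n := by
  have key : Polynomial.X * ffpoly q r n =
      ffpoly q r (n + 1) + Polynomial.C (qb q (r + n)) * ffpoly q r n := by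
    have h : ffpoly q r (n + 1) =
        ffpoly q r n * (Polynomial.X - Polynomial.C (qb q (r + n))) := by
      simp [ffpoly, Finset.prod_range_succ]
    rw [h]; ring
  rw [key, map_add, hU, show Polynomial.C (qb q (r + n)) * ffpoly q r n =
      (qb q (r + n)) • ffpoly q r n by simp [Polynomial.smul_eq_C_mul],
    map_smul, hU, Polynomial.smul_eq_C_mul]
end
end

section
/- The generalized q-Poisson-Charlier polynomials h_n(x,a,r) = ∑_{k=0}^n (-a)^k q^{C(k,2)} [n choose k]_q ⟨x⟩_{r,n-k} satisfy the three-term recurrence x·h_n(x,a,r) = h_{n+1}(x,a,r) + ([r] + q^r[n] + q^n a)·h_n(x,a,r) + q^{r+n-1}[n]a·h_{n-1}(x,a,r) for n ≥ 1. -/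
noncomputable section

open Finset Polynomial

/-- Generalized q-Poisson-Charlier polynomials. -/
def hPC (q a : ℚ) (r : ℕ) (n : ℕ) (x : ℚ) : ℚ :=
  ∑ k ∈ Finset.range (n + 1),
    (-a) ^ k * q ^ Nat.choose k 2 * qbinom q n k * qfall q r x (n - k)

/- ### Auxiliary lemmas -/

lemma qb_zero (q : ℚ) : qb q 0 = 0 := by simp [qb]
lemma qb_one (q : ℚ) : qb q 1 = 1 := by simp [qb]

lemma qb_add (q : ℚ) (m j : ℕ) : qb q (m + j) = qb q m + q ^ m * qb q j := by
  simp only [qb, Finset.sum_range_add, pow_add, Finset.mul_sum]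

lemma qb_succ (q : ℚ) (m : ℕ) : qb q (m + 1) = qb q m + q ^ m := by
  simp [qb, Finset.sum_range_succ]

lemma qb_succ' (q : ℚ) (m : ℕ) : qb q (m + 1) = 1 + q * qb q m := by
  have h := qb_add q 1 m
  rw [qb_one, pow_one] at h
  rw [show m + 1 = 1 + m by omega, h]

lemma qbinom_succ_succ (q : ℚ) (n k : ℕ) :
    qbinom q (n + 1) (k + 1) = qbinom q n k + q ^ (k + 1) * qbinom q n (k + 1) := rfl

lemma qbinom_zero_right (q : ℚ) (n : ℕ) : qbinom q n 0 = 1 := by cases n <;> rfl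

lemma qbinom_zero (q : ℚ) : ∀ n k, n < k → qbinom q n k = 0 := by
  intro n
  induction n with
  | zero => intro k hk; match k, hk with
    | k + 1, _ => rfl
  | succ n ih =>
    intro k hk
    match k, hk with
    | k + 1, hk =>
      rw [qbinom_succ_succ, ih k (by omega), ih (k+1) (by omega)]
      ring

lemma qbinom_one (q : ℚ) (n : ℕ) : qbinom q n 1 = qb q n := by
  induction n with
  | zero => simp [qbinom, qb]
  | succ n ih =>
    rw [qbinom_succ_succ, ih, qbinom_zero_right, qb_succ']
    ring

/-- dual q-Pascal -/
lemma qbinom_dual (q : ℚ) : ∀ n k, qbinom q (n + 1) (k + 1)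
    = qbinom q n (k + 1) + q ^ (n - k) * qbinom q n k := by
  intro n
  induction n with
  | zero =>
    intro k
    match k with
    | 0 => simp [qbinom]
    | k + 1 =>
      rw [qbinom_succ_succ, qbinom_zero q 0 (k+1) (by omega), qbinom_zero q 0 (k+2) (by omega)]
      ring
  | succ n ih =>
    intro k
    match k with
    | 0 =>
      rw [qbinom_succ_succ, qbinom_one, qbinom_zero_right,
        show n + 1 - 0 = n + 1 by omega]
      have e1 := qb_succ q n
      have e2 := qb_succ' q n
      linear_combination q * e1 - e2
    | k + 1 =>
      rw [show n + 1 - (k + 1) = n - k by omega]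
      conv_lhs => rw [qbinom_succ_succ, ih k, ih (k+1)]
      conv_rhs => rw [qbinom_succ_succ, qbinom_succ_succ]
      by_cases hk : k + 1 ≤ n
      · rw [show n - k = (n - (k+1)) + 1 by omega]
        ring
      · rw [qbinom_zero q n (k+1) (by omega), qbinom_zero q n (k+2) (by omega)]
        ring

/-- [n+1-k] * B(n+1,k) = [n+1] * B(n,k) -/
lemma qbinom_absorb' (q : ℚ) : ∀ n k, qb q (n + 1 - k) * qbinom q (n + 1) k
    = qb q (n + 1) * qbinom q n k := by
  intro n
  induction n with
  | zero =>
    intro k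
    match k with
    | 0 => simp [qbinom_zero_right]
    | 1 => rw [qbinom_one, qbinom_zero q 0 1 (by omega), show (1:ℕ) - 1 = 0 from rfl, qb_zero]; ring
    | k + 2 => rw [qbinom_zero q 1 (k+2) (by omega), qbinom_zero q 0 (k+2) (by omega)]; ring
  | succ n ih =>
    intro k
    match k with
    | 0 => rw [qbinom_zero_right, qbinom_zero_right, Nat.sub_zero]
    | k + 1 =>
      by_cases hk : k ≤ n
      · obtain ⟨m, rfl⟩ : ∃ m, n = k + m := ⟨n - k, by omega⟩
        rw [show k + m + 1 + 1 - (k + 1) = m + 1 by omega]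
        have e0 := qbinom_succ_succ q (k+m+1) k
        have e1 := ih k
        rw [show k + m + 1 - k = m + 1 by omega] at e1
        have e2 := ih (k+1)
        rw [show k + m + 1 - (k+1) = m by omega] at e2
        have e3 := qbinom_succ_succ q (k+m) k
        have e4 := qb_succ q m
        have e5 := qb_succ q (k+m+1)
        linear_combination qb q (m+1) * e0 + e1 + q^(k+1) * qbinom q (k+m+1) (k+1) * e4
          + q^(k+1) * e2 - qb q (k+m+1) * e3 - qbinom q (k+m+1) (k+1) * e5
      · rw [show n + 1 + 1 - (k + 1) = 0 by omega, qb_zero,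
          qbinom_zero q (n+1) (k+1) (by omega)]
        ring

/-- [k+1] * B(n+1,k+1) = [n+1] * B(n,k) -/
lemma qbinom_absorb (q : ℚ) : ∀ n k, qb q (k + 1) * qbinom q (n + 1) (k + 1)
    = qb q (n + 1) * qbinom q n k := by
  intro n
  induction n with
  | zero =>
    intro k
    match k with
    | 0 =>
      rw [qbinom_one, qb_one, qbinom_zero_right]
    | k + 1 =>
      rw [qbinom_zero q 1 (k+2) (by omega), qbinom_zero q 0 (k+1) (by omega)]
      ring
  | succ n ih =>
    intro k
    match k with
    | 0 => rw [qbinom_one, qb_one, qbinom_zero_right]; ring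
    | k + 1 =>
      by_cases hk : k ≤ n
      · obtain ⟨m, rfl⟩ : ∃ m, n = k + m := ⟨n - k, by omega⟩
        have e0 := qbinom_succ_succ q (k+m+1) (k+1)
        have e1 := ih (k+1)
        have e2 := qbinom_absorb' q (k+m) (k+1)
        rw [show k + m + 1 - (k+1) = m by omega] at e2
        have e3 := qb_add q (k+2) m
        rw [show k + 2 + m = k + m + 2 by omega] at e3
        linear_combination qb q (k+2) * e0 + q^(k+2) * e1 - q^(k+2) * e2
          - qbinom q (k+m+1) (k+1) * e3
      · rw [qbinom_zero q (n+1+1) (k+2) (by omega), qbinom_zero q (n+1) (k+1) (by omega)]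
        ring

lemma qfall_succ (q : ℚ) (r : ℕ) (x : ℚ) (m : ℕ) :
    qfall q r x (m + 1) = qfall q r x m * (x - qb q (r + m)) := Finset.prod_range_succ _ _

/-- the key per-coefficient identity -/
lemma coeff_id (q a : ℚ) (r n i : ℕ) (hi : i ≤ n) :
    (-a)^(i+2) * q^(Nat.choose (i+2) 2) * qbinom q (n+1) (i+2)
      + (-a)^(i+1) * q^(Nat.choose (i+1) 2) * qbinom q (n+1) (i+1) * qb q (r + (n-i))
    = (-a)^(i+2) * q^(Nat.choose (i+2) 2) * qbinom q (n+2) (i+2)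
      + (qb q r + q^r * qb q (n+1) + q^(n+1) * a)
          * ((-a)^(i+1) * q^(Nat.choose (i+1) 2) * qbinom q (n+1) (i+1))
      + q^(r+n) * qb q (n+1) * a * ((-a)^i * q^(Nat.choose i 2) * qbinom q n i) := by
  obtain ⟨m, rfl⟩ : ∃ m, n = i + m := ⟨n - i, by omega⟩
  rw [show i + m - i = m by omega]
  have d1 := qbinom_dual q (i+m+1) (i+1)
  rw [show i + m + 1 - (i+1) = m by omega] at d1
  have d2 := qbinom_absorb q (i+m) i
  have d3 := qb_add q r m
  have d4 := qb_add q m (i+1)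
  rw [show m + (i+1) = i + m + 1 by omega] at d4
  rw [show Nat.choose (i+2) 2 = Nat.choose i 2 + i + (i+1) by
      rw [Nat.choose_succ_succ (i+1) 1, Nat.choose_succ_succ i 1, Nat.choose_one_right,
        Nat.choose_one_right]; ring,
    show Nat.choose (i+1) 2 = Nat.choose i 2 + i by
      rw [Nat.choose_succ_succ i 1, Nat.choose_one_right]; ring,
    show i + m + 1 + 1 = i + m + 2 from rfl]
  linear_combination (-((-a)^(i+2) * q^(Nat.choose i 2 + i + (i+1)))) * d1
    + ((-a)^(i+1) * q^(Nat.choose i 2 + i) * qbinom q (i+m+1) (i+1)) * d3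
    + (-((-a)^(i+1) * q^(Nat.choose i 2 + i) * q^r * qbinom q (i+m+1) (i+1))) * d4
    + (a * (-a)^i * q^(Nat.choose i 2 + r + i + m)) * d2

/-- Three-term recurrence:
x h_n = h_{n+1} + ([r] + q^r [n] + q^n a) h_n + q^{r+n-1} [n] a h_{n-1} (n ≥ 1),
stated with n replaced by n+1. -/
theorem hPC_three_term (q a : ℚ) (r : ℕ) (n : ℕ) (x : ℚ) :
    x * hPC q a r (n + 1) x =
      hPC q a r (n + 2) x +
        (qb q r + q ^ r * qb q (n + 1) + q ^ (n + 1) * a) * hPC q a r (n + 1) x +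
        q ^ (r + n) * qb q (n + 1) * a * hPC q a r n x := by
  have hsplit1 : ∀ f : ℕ → ℚ, ∑ k ∈ Finset.range (n+1), f k
      = f 0 + ∑ j ∈ Finset.range n, f (j+1) := fun f => by
    rw [Finset.sum_range_succ' f n]; ring
  have hsplit2 : ∀ f : ℕ → ℚ, ∑ k ∈ Finset.range (n+2), f k
      = f 0 + ∑ j ∈ Finset.range (n+1), f (j+1) := fun f => by
    rw [Finset.sum_range_succ' f (n+1)]; ring
  have hsplit3 : ∀ f : ℕ → ℚ, ∑ k ∈ Finset.range (n+3), f k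
      = f 0 + ∑ j ∈ Finset.range (n+2), f (j+1) := fun f => by
    rw [Finset.sum_range_succ' f (n+2)]; ring
  -- canonical forms
  have h4 : hPC q a r n x
      = ∑ i ∈ Finset.range (n+1), (-a)^i * q^(Nat.choose i 2) * qbinom q n i
          * qfall q r x (n-i) := rfl
  have h3 : hPC q a r (n+1) x
      = qfall q r x (n+1)
        + ∑ i ∈ Finset.range (n+1), (-a)^(i+1) * q^(Nat.choose (i+1) 2)
            * qbinom q (n+1) (i+1) * qfall q r x (n-i) := by
    have h0 : hPC q a r (n+1) x = ∑ k ∈ Finset.range (n+2),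
        (-a)^k * q^(Nat.choose k 2) * qbinom q (n+1) k * qfall q r x (n+1-k) := rfl
    rw [h0, hsplit2]
    have e : (∑ j ∈ Finset.range (n+1), (-a)^(j+1) * q^(Nat.choose (j+1) 2)
          * qbinom q (n+1) (j+1) * qfall q r x (n+1-(j+1)))
        = ∑ i ∈ Finset.range (n+1), (-a)^(i+1) * q^(Nat.choose (i+1) 2)
            * qbinom q (n+1) (i+1) * qfall q r x (n-i) :=
      Finset.sum_congr rfl fun j hj => by rw [show n + 1 - (j+1) = n - j by omega]
    simp only [pow_zero, one_mul, Nat.sub_zero, qbinom_zero_right, zero_add,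
      show Nat.choose 0 2 = 0 from rfl]
    linear_combination e
  have h2 : hPC q a r (n+2) x
      = qfall q r x (n+2)
        + (-a)^1 * q^(Nat.choose 1 2) * qbinom q (n+2) 1 * qfall q r x (n+1)
        + ∑ i ∈ Finset.range (n+1), (-a)^(i+2) * q^(Nat.choose (i+2) 2)
            * qbinom q (n+2) (i+2) * qfall q r x (n-i) := by
    have h0 : hPC q a r (n+2) x = ∑ k ∈ Finset.range (n+3),
        (-a)^k * q^(Nat.choose k 2) * qbinom q (n+2) k * qfall q r x (n+2-k) := rfl
    rw [h0, hsplit3, hsplit2]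
    have e : (∑ j ∈ Finset.range (n+1), (-a)^(j+1+1) * q^(Nat.choose (j+1+1) 2)
          * qbinom q (n+2) (j+1+1) * qfall q r x (n+2-(j+1+1)))
        = ∑ i ∈ Finset.range (n+1), (-a)^(i+2) * q^(Nat.choose (i+2) 2)
            * qbinom q (n+2) (i+2) * qfall q r x (n-i) :=
      Finset.sum_congr rfl fun j hj => by
        rw [show n + 2 - (j+1+1) = n - j by omega, show j+1+1 = j+2 from rfl]
    simp only [pow_zero, one_mul, Nat.sub_zero, qbinom_zero_right, zero_add,
      show Nat.choose 0 2 = 0 from rfl, show (0:ℕ)+1 = 1 from rfl,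
      show n+2-1 = n+1 from rfl]
    linear_combination e
  -- the left-hand side
  have h1 : x * hPC q a r (n+1) x
      = qfall q r x (n+2)
        + ((-a)^1 * q^(Nat.choose 1 2) * qbinom q (n+1) 1 + qb q (r+(n+1)))
            * qfall q r x (n+1)
        + (∑ i ∈ Finset.range (n+1), (-a)^(i+2) * q^(Nat.choose (i+2) 2)
              * qbinom q (n+1) (i+2) * qfall q r x (n-i)
           + ∑ i ∈ Finset.range (n+1), (-a)^(i+1) * q^(Nat.choose (i+1) 2)
              * qbinom q (n+1) (i+1) * qb q (r+(n-i)) * qfall q r x (n-i)) := by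
    have h0 : hPC q a r (n+1) x = ∑ k ∈ Finset.range (n+2),
        (-a)^k * q^(Nat.choose k 2) * qbinom q (n+1) k * qfall q r x (n+1-k) := rfl
    rw [h0, Finset.mul_sum]
    have hx : ∀ k ∈ Finset.range (n+2),
        x * ((-a)^k * q^(Nat.choose k 2) * qbinom q (n+1) k * qfall q r x (n+1-k))
        = (-a)^k * q^(Nat.choose k 2) * qbinom q (n+1) k * qfall q r x (n+2-k)
          + (-a)^k * q^(Nat.choose k 2) * qbinom q (n+1) k * qb q (r+(n+1-k))
              * qfall q r x (n+1-k) := by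
      intro k hk
      have hk' : k < n + 2 := Finset.mem_range.mp hk
      rw [show n+2-k = (n+1-k)+1 by omega, qfall_succ]
      ring
    rw [Finset.sum_congr rfl hx, Finset.sum_add_distrib]
    have hS1 : ∑ k ∈ Finset.range (n+2),
        (-a)^k * q^(Nat.choose k 2) * qbinom q (n+1) k * qfall q r x (n+2-k)
        = qfall q r x (n+2)
          + (-a)^1 * q^(Nat.choose 1 2) * qbinom q (n+1) 1 * qfall q r x (n+1)
          + ∑ i ∈ Finset.range (n+1), (-a)^(i+2) * q^(Nat.choose (i+2) 2)
              * qbinom q (n+1) (i+2) * qfall q r x (n-i) := by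
      rw [hsplit2 (fun k => (-a)^k * q^(Nat.choose k 2) * qbinom q (n+1) k
        * qfall q r x (n+2-k))]
      rw [hsplit1 (fun j => (-a)^(j+1) * q^(Nat.choose (j+1) 2) * qbinom q (n+1) (j+1)
        * qfall q r x (n+2-(j+1)))]
      conv_rhs => rw [Finset.sum_range_succ]
      rw [qbinom_zero q (n+1) (n+2) (by omega)]
      have e : (∑ j ∈ Finset.range n, (-a)^(j+1+1) * q^(Nat.choose (j+1+1) 2)
            * qbinom q (n+1) (j+1+1) * qfall q r x (n+2-(j+1+1)))
          = ∑ i ∈ Finset.range n, (-a)^(i+2) * q^(Nat.choose (i+2) 2)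
              * qbinom q (n+1) (i+2) * qfall q r x (n-i) :=
        Finset.sum_congr rfl fun j hj => by
          rw [show n + 2 - (j+1+1) = n - j by omega, show j+1+1 = j+2 from rfl]
      simp only [pow_zero, one_mul, Nat.sub_zero, qbinom_zero_right, zero_add,
        show Nat.choose 0 2 = 0 from rfl, show (0:ℕ)+1 = 1 from rfl,
        show n+2-1 = n+1 from rfl]
      linear_combination e
    have hS2 : ∑ k ∈ Finset.range (n+2),
        (-a)^k * q^(Nat.choose k 2) * qbinom q (n+1) k * qb q (r+(n+1-k))
          * qfall q r x (n+1-k)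
        = qb q (r+(n+1)) * qfall q r x (n+1)
          + ∑ i ∈ Finset.range (n+1), (-a)^(i+1) * q^(Nat.choose (i+1) 2)
              * qbinom q (n+1) (i+1) * qb q (r+(n-i)) * qfall q r x (n-i) := by
      rw [hsplit2 (fun k => (-a)^k * q^(Nat.choose k 2) * qbinom q (n+1) k
        * qb q (r+(n+1-k)) * qfall q r x (n+1-k))]
      have e : (∑ j ∈ Finset.range (n+1), (-a)^(j+1) * q^(Nat.choose (j+1) 2)
            * qbinom q (n+1) (j+1) * qb q (r+(n+1-(j+1))) * qfall q r x (n+1-(j+1)))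
          = ∑ i ∈ Finset.range (n+1), (-a)^(i+1) * q^(Nat.choose (i+1) 2)
              * qbinom q (n+1) (i+1) * qb q (r+(n-i)) * qfall q r x (n-i) :=
        Finset.sum_congr rfl fun j hj => by rw [show n + 1 - (j+1) = n - j by omega]
      simp only [pow_zero, one_mul, Nat.sub_zero, qbinom_zero_right, zero_add,
        show Nat.choose 0 2 = 0 from rfl]
      linear_combination e
    rw [hS1, hS2]
    ring
  rw [h1, h2, h3, h4]
  have hQ : (∑ i ∈ Finset.range (n+1), (-a)^(i+2) * q^(Nat.choose (i+2) 2)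
              * qbinom q (n+1) (i+2) * qfall q r x (n-i))
      + ∑ i ∈ Finset.range (n+1), (-a)^(i+1) * q^(Nat.choose (i+1) 2)
              * qbinom q (n+1) (i+1) * qb q (r+(n-i)) * qfall q r x (n-i)
      = (∑ i ∈ Finset.range (n+1), (-a)^(i+2) * q^(Nat.choose (i+2) 2)
              * qbinom q (n+2) (i+2) * qfall q r x (n-i))
        + (qb q r + q^r * qb q (n+1) + q^(n+1) * a)
            * (∑ i ∈ Finset.range (n+1), (-a)^(i+1) * q^(Nat.choose (i+1) 2)
                * qbinom q (n+1) (i+1) * qfall q r x (n-i))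
        + q^(r+n) * qb q (n+1) * a
            * (∑ i ∈ Finset.range (n+1), (-a)^i * q^(Nat.choose i 2) * qbinom q n i
                * qfall q r x (n-i)) := by
    rw [Finset.mul_sum, Finset.mul_sum, ← Finset.sum_add_distrib, ← Finset.sum_add_distrib,
      ← Finset.sum_add_distrib]
    refine Finset.sum_congr rfl fun i hi => ?_
    have hi' : i ≤ n := by
      have := Finset.mem_range.mp hi; omega
    linear_combination (qfall q r x (n-i)) * coeff_id q a r n i hi'
  have hscal : (-a)^1 * q^(Nat.choose 1 2) * qbinom q (n+1) 1 + qb q (r+(n+1))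
      = (-a)^1 * q^(Nat.choose 1 2) * qbinom q (n+2) 1
        + (qb q r + q^r * qb q (n+1) + q^(n+1) * a) := by
    rw [qbinom_one, qbinom_one, qb_add q r (n+1), qb_succ q (n+1),
      show Nat.choose 1 2 = 0 from rfl]
    ring
  linear_combination hQ + (qfall q r x (n+1)) * hscal
end
end
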